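/- arXiv:1807.05868 — 5 statements merged into one kernel-verified Lean document; each statement's English description precedes it below -/
import Mathlib

section
/- Let (X,d) be a compact metric space, T : X → X a homeomorphism, μ a T-invariant Borel probability measure, and f ∈ L¹(X,μ). If f is (μ,d)-mean equicontinuous (for every τ>0 there is a compact K with μ(K)>1−τ such that for every ε>0 there is δ>0 with limsup_{n→∞} (1/n)∑_{i=0}^{n−1}|f(Tⁱx)−f(Tⁱy)| < ε whenever x,y ∈ K and d(x,y)<δ), then f is μ-mean equicontinuous in the measure-theoretic sense: for every ε>0 there exist finitely many measurable sets A₁,…,A_k with μ(⋃A_i)>1−ε such that limsup_{n→∞} (1/n)∑_{i=0}^{n−1}|f(Tⁱx)−f(Tⁱy)| < ε whenever x,y belong to a common A_i. -/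
open MeasureTheory Filter Metric Set

/-- Birkhoff average of `|f(Tⁱx) - f(Tⁱy)|`. -/
noncomputable def fbar {X : Type*} (T : X → X) (f : X → ℝ) (n : ℕ) (x y : X) : ℝ :=
  (∑ i ∈ Finset.range n, |f (T^[i] x) - f (T^[i] y)|) / n

theorem stmt0 {X : Type*} [MetricSpace X] [CompactSpace X]
    [MeasurableSpace X] [BorelSpace X]
    (T : X ≃ₜ X) (μ : Measure X) [IsProbabilityMeasure μ]
    (hT : MeasurePreserving (⇑T) μ μ) (f : X → ℝ) (hf : Integrable f μ)
    (hmec : ∀ τ : ℝ, 0 < τ → ∃ K : Set X, IsCompact K ∧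
      μ K > ENNReal.ofReal (1 - τ) ∧
      ∀ ε : ℝ, 0 < ε → ∃ δ : ℝ, 0 < δ ∧ ∀ x ∈ K, ∀ y ∈ K, dist x y < δ →
        Filter.limsup (fun n => fbar (⇑T) f n x y) Filter.atTop < ε) :
    ∀ ε : ℝ, 0 < ε → ∃ (k : ℕ) (A : Fin k → Set X),
      (∀ i, MeasurableSet (A i)) ∧ μ (⋃ i, A i) > ENNReal.ofReal (1 - ε) ∧
      ∀ i : Fin k, ∀ x ∈ A i, ∀ y ∈ A i,
        Filter.limsup (fun n => fbar (⇑T) f n x y) Filter.atTop < ε := by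
  intro ε hε
  obtain ⟨K, hK, hμK, hKε⟩ := hmec ε hε
  obtain ⟨δ, hδ, hδε⟩ := hKε ε hε
  -- cover K by finitely many balls of radius δ/2
  have hcover : K ⊆ ⋃ x : X, ball x (δ / 2) := fun x _ =>
    mem_iUnion.2 ⟨x, mem_ball_self (by linarith)⟩
  obtain ⟨t, ht⟩ := hK.elim_finite_subcover (fun x : X => ball x (δ / 2))
    (fun x => isOpen_ball) hcover
  refine ⟨t.card, fun i => K ∩ ball (t.equivFin.symm i : X) (δ / 2), ?_, ?_, ?_⟩
  · exact fun i => hK.measurableSet.inter measurableSet_ball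
  · refine lt_of_lt_of_le hμK (measure_mono ?_)
    intro x hx
    obtain ⟨_, ⟨c, rfl⟩, _, ⟨hc, rfl⟩, hxc⟩ := ht hx
    refine mem_iUnion.2 ⟨t.equivFin ⟨c, hc⟩, hx, ?_⟩
    simpa using hxc
  · rintro i x ⟨hxK, hx⟩ y ⟨hyK, hy⟩
    refine hδε x hxK y hyK ?_
    calc dist x y ≤ dist x (t.equivFin.symm i : X) + dist (t.equivFin.symm i : X) y :=
          dist_triangle _ _ _
      _ < δ / 2 + δ / 2 := add_lt_add hx (mem_ball'.mp hy)
      _ = δ := by ring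
end

section
/- Let (X,d) be a compact metric space, T : X → X a homeomorphism, μ a T-invariant regular Borel probability measure, and f ∈ L¹(X,μ). If f is μ-mean equicontinuous in the measure-theoretic sense (for every ε>0 there are finitely many measurable sets A₁,…,A_k with μ(⋃A_i)>1−ε such that limsup_n (1/n)∑_{i=0}^{n−1}|f(Tⁱx)−f(Tⁱy)|<ε whenever x,y lie in a common A_i), then f is (μ,d)-mean equicontinuous: for every τ>0 there is a compact K with μ(K)>1−τ such that for every ε>0 there is δ>0 with limsup_n (1/n)∑_{i=0}^{n−1}|f(Tⁱx)−f(Tⁱy)|<ε whenever x,y∈K and d(x,y)<δ. -/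
/-!
Fix `ε > 0` and a finite measurable family `A₁, …, A_k` on whose pieces the mean distance is
below `ε`. Disjointify it and shrink the pieces to disjoint compact sets `C_i` that miss little
measure. Disjoint compact sets are a positive distance apart, so any two points of `⋃ C_i` that
are close enough lie in the same `C_i`, hence in the same `A_i`. Doing this for a sequence
`ε_m → 0` with summable exceptional measures and intersecting the resulting compact sets gives a
single compact set that works for every `ε`.
-/

open MeasureTheory Filter Metric Set

open scoped ENNReal Topology Function

section Probability

variable {α : Type*} [MeasurableSpace α] {μ : Measure α} [IsProbabilityMeasure μ]

theorem lt_measure_iff_measure_compl_lt_one_sub {s : Set α} (hs : MeasurableSet s) {a : ℝ≥0∞}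
    (ha : a ≠ ∞) : a < μ s ↔ μ sᶜ < 1 - a := by
  rw [← ENNReal.add_lt_add_iff_right (measure_ne_top μ sᶜ), measure_add_measure_compl hs,
    measure_univ, (ENNReal.cancel_of_ne ha).lt_tsub_iff_left]

theorem measure_compl_le_ofReal_of_ofReal_one_sub_lt {s : Set α} (hs : MeasurableSet s) {ε : ℝ}
    (h : ENNReal.ofReal (1 - ε) < μ s) : μ sᶜ ≤ ENNReal.ofReal ε :=
  calc μ sᶜ ≤ 1 - ENNReal.ofReal (1 - ε) :=
        ((lt_measure_iff_measure_compl_lt_one_sub hs ENNReal.ofReal_ne_top).1 h).le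
    _ ≤ ENNReal.ofReal ε := by
        rw [tsub_le_iff_right]
        calc (1 : ℝ≥0∞) = ENNReal.ofReal (ε + (1 - ε)) := by
              rw [add_sub_cancel, ENNReal.ofReal_one]
          _ ≤ _ := ENNReal.ofReal_add_le

end Probability

theorem measurableSet_disjointed {α ι : Type*} [MeasurableSpace α] [Preorder ι]
    [LocallyFiniteOrderBot ι] [Countable ι] {A : ι → Set α} (hA : ∀ i, MeasurableSet (A i))
    (i : ι) : MeasurableSet (disjointed A i) := by
  rw [disjointed_eq_inter_compl]
  exact (hA i).inter (.iInter fun j => .iInter fun _ => (hA j).compl)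

theorem exists_isCompact_subset_measure_iUnion_sdiff_lt {α ι : Type*} [TopologicalSpace α]
    [T2Space α] [MeasurableSpace α] [OpensMeasurableSpace α] (μ : Measure α) [IsFiniteMeasure μ]
    [μ.InnerRegularCompactLTTop] [Countable ι] {B : ι → Set α} (hB : ∀ i, MeasurableSet (B i))
    {η : ℝ≥0∞} (hη : η ≠ 0) :
    ∃ C : ι → Set α, (∀ i, C i ⊆ B i) ∧ (∀ i, IsCompact (C i)) ∧
      μ ((⋃ i, B i) \ ⋃ i, C i) < η := by
  obtain ⟨η', hη'pos, hη'sum⟩ := ENNReal.exists_pos_sum_of_countable hη ι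
  choose C hCB hC hCμ using fun i => (hB i).exists_isCompact_sdiff_lt (measure_ne_top μ _)
    (ENNReal.coe_ne_zero.2 (hη'pos i).ne')
  refine ⟨C, hCB, hC, lt_of_le_of_lt ?_ hη'sum⟩
  calc μ ((⋃ i, B i) \ ⋃ i, C i) ≤ μ (⋃ i, B i \ C i) := by
        rw [iUnion_sdiff]
        exact measure_mono (iUnion_mono fun i => sdiff_subset_sdiff_right (subset_iUnion C i))
    _ ≤ ∑' i, μ (B i \ C i) := measure_iUnion_le _
    _ ≤ ∑' i, (η' i : ℝ≥0∞) := ENNReal.tsum_le_tsum fun i => (hCμ i).le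

section Metric

variable {X : Type*} [MetricSpace X]

theorem exists_pos_forall_dist_lt_exists_mem_mem {ι : Type*} [Finite ι] {C : ι → Set X}
    (hC : ∀ i, IsCompact (C i)) (hdisj : Pairwise (Disjoint on C)) :
    ∃ δ > 0, ∀ x ∈ ⋃ i, C i, ∀ y ∈ ⋃ i, C i, dist x y < δ → ∃ i, x ∈ C i ∧ y ∈ C i := by
  -- take for `δ` a Lebesgue number of the open cover `U` of `⋃ C`
  set U : ι → Set X := fun i => ⋂ (j) (_ : j ≠ i), (C j)ᶜ
  have hU : ∀ i, IsOpen (U i) := fun i =>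
    isOpen_iInter_of_finite fun j => isOpen_iInter_of_finite fun _ => (hC j).isClosed.isOpen_compl
  have eq_of_mem : ∀ {i j z}, z ∈ C j → z ∈ U i → j = i := by
    intro i j z hz hzU
    by_contra hji
    exact mem_iInter₂.1 hzU j hji hz
  have hcover : ⋃ i, C i ⊆ ⋃ i, U i := iUnion_mono fun i z hz =>
    mem_iInter₂.2 fun j hji hzj => disjoint_left.1 (hdisj hji) hzj hz
  obtain ⟨δ, hδ, hball⟩ := lebesgue_number_lemma_of_metric (isCompact_iUnion hC) hU hcover
  refine ⟨δ, hδ, fun x hx y hy hxy => ?_⟩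
  obtain ⟨i, hxi⟩ := mem_iUnion.1 hx
  obtain ⟨j, hyj⟩ := mem_iUnion.1 hy
  obtain ⟨l, hl⟩ := hball x hx
  have hil : i = l := eq_of_mem hxi (hl (mem_ball_self hδ))
  have hjl : j = l := eq_of_mem hyj (hl (mem_ball'.2 hxy))
  exact ⟨l, hil ▸ hxi, hjl ▸ hyj⟩

theorem exists_isCompact_measure_iUnion_sdiff_lt_forall_dist_lt [MeasurableSpace X]
    [OpensMeasurableSpace X] (μ : Measure X) [IsFiniteMeasure μ] [μ.InnerRegularCompactLTTop]
    {ι : Type*} [LinearOrder ι] [LocallyFiniteOrderBot ι] [Finite ι] {A : ι → Set X}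
    (hA : ∀ i, MeasurableSet (A i)) {η : ℝ≥0∞} (hη : η ≠ 0) :
    ∃ K, IsCompact K ∧ μ ((⋃ i, A i) \ K) < η ∧
      ∃ δ > 0, ∀ x ∈ K, ∀ y ∈ K, dist x y < δ → ∃ i, x ∈ A i ∧ y ∈ A i := by
  obtain ⟨C, hCA, hC, hCμ⟩ :=
    exists_isCompact_subset_measure_iUnion_sdiff_lt μ (measurableSet_disjointed hA) hη
  rw [iUnion_disjointed] at hCμ
  have hdisj : Pairwise (Disjoint on C) := fun i j hij =>
    (disjoint_disjointed A hij).mono (hCA i) (hCA j)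
  obtain ⟨δ, hδ, hsame⟩ := exists_pos_forall_dist_lt_exists_mem_mem hC hdisj
  refine ⟨⋃ i, C i, isCompact_iUnion hC, hCμ, δ, hδ, fun x hx y hy hxy => ?_⟩
  obtain ⟨i, hxi, hyi⟩ := hsame x hx y hy hxy
  exact ⟨i, disjointed_subset A i (hCA i hxi), disjointed_subset A i (hCA i hyi)⟩

theorem exists_isCompact_measure_compl_lt_forall_dist_lt [MeasurableSpace X] (μ : Measure X)
    {F : X → X → ℝ}
    (h : ∀ ε > 0, ∃ K, IsCompact K ∧ μ Kᶜ < ENNReal.ofReal ε ∧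
      ∃ δ > 0, ∀ x ∈ K, ∀ y ∈ K, dist x y < δ → F x y < ε)
    {η : ℝ≥0∞} (hη : η ≠ 0) :
    ∃ K, IsCompact K ∧ μ Kᶜ < η ∧
      ∀ ε > 0, ∃ δ > 0, ∀ x ∈ K, ∀ y ∈ K, dist x y < δ → F x y < ε := by
  obtain ⟨ε', hε'pos, hε'sum⟩ := ENNReal.exists_pos_sum_of_countable hη ℕ
  choose K hK hKμ hKδ using fun m => h (ε' m) (hε'pos m)
  refine ⟨⋂ m, K m, (hK 0).of_isClosed_subset (isClosed_iInter fun m => (hK m).isClosed)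
    (iInter_subset K 0), ?_, fun ε hε => ?_⟩
  · calc μ (⋂ m, K m)ᶜ = μ (⋃ m, (K m)ᶜ) := by rw [compl_iInter]
      _ ≤ ∑' m, μ (K m)ᶜ := measure_iUnion_le _
      _ ≤ ∑' m, (ε' m : ℝ≥0∞) := ENNReal.tsum_le_tsum fun m => by
          simpa only [ENNReal.ofReal_coe_nnreal] using (hKμ m).le
      _ < η := hε'sum
  · have hε'lim : Tendsto (fun m => (ε' m : ℝ)) atTop (𝓝 0) := NNReal.tendsto_coe.2 <|
      NNReal.tendsto_atTop_zero_of_summable <|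
        ENNReal.tsum_coe_ne_top_iff_summable.1 (ne_top_of_lt hε'sum)
    obtain ⟨m, hm⟩ := (hε'lim.eventually (gt_mem_nhds hε)).exists
    obtain ⟨δ, hδ, hKm⟩ := hKδ m
    exact ⟨δ, hδ, fun x hx y hy hxy =>
      (hKm x (mem_iInter.1 hx m) y (mem_iInter.1 hy m) hxy).trans hm⟩

end Metric

section MeanEquicontinuity

variable {X : Type*} [MeasurableSpace X]

/- With `F x y = limsup_n fbar T f n x y` these are the `μ`-mean equicontinuity and the
`(μ, d)`-mean equicontinuity of `f`. -/
def MeasureEquicontinuous (μ : Measure X) (F : X → X → ℝ) : Prop :=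
  ∀ ε : ℝ, 0 < ε → ∃ (k : ℕ) (A : Fin k → Set X),
    (∀ i, MeasurableSet (A i)) ∧ μ (⋃ i, A i) > ENNReal.ofReal (1 - ε) ∧
    ∀ i : Fin k, ∀ x ∈ A i, ∀ y ∈ A i, F x y < ε

variable [MetricSpace X]

def CompactMeasureEquicontinuous (μ : Measure X) (F : X → X → ℝ) : Prop :=
  ∀ τ : ℝ, 0 < τ → ∃ K : Set X, IsCompact K ∧ μ K > ENNReal.ofReal (1 - τ) ∧
    ∀ ε : ℝ, 0 < ε → ∃ δ : ℝ, 0 < δ ∧ ∀ x ∈ K, ∀ y ∈ K, dist x y < δ → F x y < ε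

variable [OpensMeasurableSpace X] {μ : Measure X} [IsProbabilityMeasure μ]
  [μ.InnerRegularCompactLTTop] {F : X → X → ℝ}

theorem MeasureEquicontinuous.exists_isCompact_measure_compl_lt
    (h : MeasureEquicontinuous μ F) {ε : ℝ} (hε : 0 < ε) :
    ∃ K, IsCompact K ∧ μ Kᶜ < ENNReal.ofReal ε ∧
      ∃ δ > 0, ∀ x ∈ K, ∀ y ∈ K, dist x y < δ → F x y < ε := by
  obtain ⟨k, A, hA, hμA, hF⟩ := h (ε / 2) (half_pos hε)
  obtain ⟨K, hK, hKμ, δ, hδ, hsame⟩ := exists_isCompact_measure_iUnion_sdiff_lt_forall_dist_lt μ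
    hA (ENNReal.ofReal_pos.2 (half_pos hε)).ne'
  refine ⟨K, hK, ?_, δ, hδ, fun x hx y hy hxy => ?_⟩
  · have hsub : Kᶜ ⊆ (⋃ i, A i)ᶜ ∪ ((⋃ i, A i) \ K) := fun x hx =>
      (em (x ∈ ⋃ i, A i)).elim (fun hA => .inr ⟨hA, hx⟩) .inl
    calc μ Kᶜ ≤ μ (⋃ i, A i)ᶜ + μ ((⋃ i, A i) \ K) :=
          (measure_mono hsub).trans (measure_union_le _ _)
      _ < ENNReal.ofReal (ε / 2) + ENNReal.ofReal (ε / 2) :=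
          ENNReal.add_lt_add_of_le_of_lt (measure_ne_top μ _)
            (measure_compl_le_ofReal_of_ofReal_one_sub_lt (.iUnion hA) hμA) hKμ
      _ = ENNReal.ofReal ε := by
          rw [← ENNReal.ofReal_add (half_pos hε).le (half_pos hε).le, add_halves]
  · obtain ⟨i, hxi, hyi⟩ := hsame x hx y hy hxy
    exact (hF i x hxi y hyi).trans (half_lt_self hε)

theorem MeasureEquicontinuous.compactMeasureEquicontinuous (h : MeasureEquicontinuous μ F) :
    CompactMeasureEquicontinuous μ F := by
  intro τ hτ
  have hη : 1 - ENNReal.ofReal (1 - τ) ≠ 0 :=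
    (tsub_pos_of_lt (ENNReal.ofReal_lt_one.2 (by linarith))).ne'
  obtain ⟨K, hK, hKμ, hKδ⟩ := exists_isCompact_measure_compl_lt_forall_dist_lt μ
    (fun ε hε => h.exists_isCompact_measure_compl_lt hε) hη
  refine ⟨K, hK, (lt_measure_iff_measure_compl_lt_one_sub hK.measurableSet
    ENNReal.ofReal_ne_top).2 hKμ, fun ε hε => ?_⟩
  simpa only [gt_iff_lt, exists_prop] using hKδ ε hε

end MeanEquicontinuity

theorem stmt1_general {X : Type*} [MetricSpace X]
    [MeasurableSpace X] [BorelSpace X]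
    (T : X ≃ₜ X) (μ : Measure X) [IsProbabilityMeasure μ] [μ.Regular]
    (f : X → ℝ)
    (hmec : ∀ ε : ℝ, 0 < ε → ∃ (k : ℕ) (A : Fin k → Set X),
      (∀ i, MeasurableSet (A i)) ∧ μ (⋃ i, A i) > ENNReal.ofReal (1 - ε) ∧
      ∀ i : Fin k, ∀ x ∈ A i, ∀ y ∈ A i,
        Filter.limsup (fun n => fbar (⇑T) f n x y) Filter.atTop < ε) :
    ∀ τ : ℝ, 0 < τ → ∃ K : Set X, IsCompact K ∧
      μ K > ENNReal.ofReal (1 - τ) ∧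
      ∀ ε : ℝ, 0 < ε → ∃ δ : ℝ, 0 < δ ∧ ∀ x ∈ K, ∀ y ∈ K, dist x y < δ →
        Filter.limsup (fun n => fbar (⇑T) f n x y) Filter.atTop < ε :=
  MeasureEquicontinuous.compactMeasureEquicontinuous hmec

theorem stmt1 {X : Type*} [MetricSpace X] [CompactSpace X]
    [MeasurableSpace X] [BorelSpace X]
    (T : X ≃ₜ X) (μ : Measure X) [IsProbabilityMeasure μ] [μ.Regular]
    (hT : MeasurePreserving (⇑T) μ μ) (f : X → ℝ) (hf : Integrable f μ)
    (hmec : ∀ ε : ℝ, 0 < ε → ∃ (k : ℕ) (A : Fin k → Set X),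
      (∀ i, MeasurableSet (A i)) ∧ μ (⋃ i, A i) > ENNReal.ofReal (1 - ε) ∧
      ∀ i : Fin k, ∀ x ∈ A i, ∀ y ∈ A i,
        Filter.limsup (fun n => fbar (⇑T) f n x y) Filter.atTop < ε) :
    ∀ τ : ℝ, 0 < τ → ∃ K : Set X, IsCompact K ∧
      μ K > ENNReal.ofReal (1 - τ) ∧
      ∀ ε : ℝ, 0 < ε → ∃ δ : ℝ, 0 < δ ∧ ∀ x ∈ K, ∀ y ∈ K, dist x y < δ →
        Filter.limsup (fun n => fbar (⇑T) f n x y) Filter.atTop < ε :=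
  stmt1_general T μ f hmec
end

section
/- Let (X,d) be a compact metric space, T a homeomorphism, μ a T-invariant regular Borel probability measure, and f ∈ L¹(X,μ). Suppose that for every ε>0 there exist finitely many measurable sets A₁,…,A_k with μ(⋃A_i)>1−ε such that for all x,y in a common A_i and all n≥1, (1/n)∑_{i=0}^{n−1}|f(Tⁱx)−f(Tⁱy)| < ε. Then f is μ-equicontinuous in the mean: for every τ>0 there is a compact K with μ(K)>1−τ such that for every ε>0 there is δ>0 with (1/n)∑_{i=0}^{n−1}|f(Tⁱx)−f(Tⁱy)|<ε for all n≥1 whenever x,y∈K and d(x,y)<δ. -/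
open MeasureTheory Filter Metric Set
open scoped ENNReal

lemma step_lemma {X : Type*} [MetricSpace X] [CompactSpace X]
    [MeasurableSpace X] [BorelSpace X]
    (T : X → X) (f : X → ℝ) (μ : Measure X) [IsProbabilityMeasure μ] [μ.Regular]
    {e : ℝ} (he : 0 < e) (he1 : e ≤ 1)
    {k : ℕ} {A : Fin k → Set X} (hA : ∀ i, MeasurableSet (A i))
    (hm : μ (⋃ i, A i) > ENNReal.ofReal (1 - e))
    (hfb : ∀ i : Fin k, ∀ x ∈ A i, ∀ y ∈ A i, ∀ n : ℕ, 1 ≤ n → fbar T f n x y < e) :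
    ∃ C : Set X, IsCompact C ∧ μ Cᶜ ≤ ENNReal.ofReal (2 * e) ∧
      ∃ δ : ℝ, 0 < δ ∧ ∀ x ∈ C, ∀ y ∈ C, dist x y < δ → ∀ n : ℕ, 1 ≤ n →
        fbar T f n x y < e := by
  classical
  -- extend `A` to `ℕ` and disjointify
  set A' : ℕ → Set X := fun n => if h : n < k then A ⟨n, h⟩ else ∅ with hA'
  have hA'meas : ∀ n, MeasurableSet (A' n) := by
    intro n
    by_cases h : n < k
    · simpa [hA', h] using hA ⟨n, h⟩
    · simp [hA', h]
  set B : ℕ → Set X := disjointed A' with hB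
  have hBmeas : ∀ n, MeasurableSet (B n) := MeasurableSet.disjointed hA'meas
  have hBsub : ∀ n, B n ⊆ A' n := disjointed_subset A'
  have hBdisj : Pairwise (Function.onFun Disjoint B) := disjoint_disjointed A'
  have hBU : (⋃ n, B n) = ⋃ i, A i := by
    rw [hB, iUnion_disjointed]
    apply subset_antisymm
    · intro x hx
      obtain ⟨n, hn⟩ := mem_iUnion.1 hx
      by_cases h : n < k
      · exact mem_iUnion.2 ⟨⟨n, h⟩, by simpa [hA', h] using hn⟩
      · simp [hA', h] at hn
    · intro x hx
      obtain ⟨i, hi⟩ := mem_iUnion.1 hx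
      exact mem_iUnion.2 ⟨(i : ℕ), by simpa [hA', i.2] using hi⟩
  -- choose compact subsets
  have hfin : ∀ (i : Fin k), μ (B i) ≠ ⊤ := fun i => measure_ne_top μ _
  have hek : (0:ℝ≥0∞) < ENNReal.ofReal (e / (k + 1)) := by
    rw [ENNReal.ofReal_pos]; positivity
  choose C hCsub hCcomp hCm using fun i : Fin k =>
    (hBmeas i).exists_isCompact_diff_lt (hfin i) hek.ne'
  set K : Set X := ⋃ i : Fin k, C i with hK
  have hKcomp : IsCompact K := isCompact_iUnion hCcomp
  -- measure bound
  have hcovA : μ ((⋃ i, A i)ᶜ) ≤ ENNReal.ofReal e := by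
    have h1 : μ ((⋃ i, A i)ᶜ) + μ (⋃ i, A i) = 1 := by
      rw [add_comm]
      simpa using measure_add_measure_compl (μ := μ) (MeasurableSet.iUnion fun i => hA i)
    have h2 : ENNReal.ofReal (1 - e) + ENNReal.ofReal e = 1 := by
      rw [← ENNReal.ofReal_add (by linarith) he.le]
      norm_num
    by_contra hcon
    push_neg at hcon
    have : (1:ℝ≥0∞) < μ ((⋃ i, A i)ᶜ) + μ (⋃ i, A i) := by
      calc (1:ℝ≥0∞) = ENNReal.ofReal (1 - e) + ENNReal.ofReal e := h2.symm
        _ < μ (⋃ i, A i) + ENNReal.ofReal e :=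
            (ENNReal.add_lt_add_iff_right ENNReal.ofReal_ne_top).2 hm
        _ ≤ μ (⋃ i, A i) + μ ((⋃ i, A i)ᶜ) := add_le_add le_rfl hcon.le
        _ = μ ((⋃ i, A i)ᶜ) + μ (⋃ i, A i) := add_comm _ _
    rw [h1] at this
    exact lt_irrefl _ this
  have hKm : μ Kᶜ ≤ ENNReal.ofReal (2 * e) := by
    have hsub : Kᶜ ⊆ (⋃ i, A i)ᶜ ∪ ⋃ i : Fin k, (B i \ C i) := by
      intro x hx
      by_cases hxA : x ∈ ⋃ i, A i
      · right
        rw [← hBU] at hxA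
        obtain ⟨n, hn⟩ := mem_iUnion.1 hxA
        have hnk : n < k := by
          by_contra h
          have := hBsub n hn
          simp [hA', h] at this
        refine mem_iUnion.2 ⟨⟨n, hnk⟩, hn, fun hc => hx (mem_iUnion.2 ⟨⟨n, hnk⟩, hc⟩)⟩
      · exact Or.inl hxA
    calc μ Kᶜ ≤ μ ((⋃ i, A i)ᶜ) + μ (⋃ i : Fin k, (B i \ C i)) :=
          le_trans (measure_mono hsub) (measure_union_le _ _)
      _ ≤ ENNReal.ofReal e + ∑ i : Fin k, μ (B i \ C i) :=
          add_le_add hcovA (measure_iUnion_fintype_le μ _)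
      _ ≤ ENNReal.ofReal e + ∑ _i : Fin k, ENNReal.ofReal (e / (k + 1)) := by
          gcongr with i
          exact (hCm i).le
      _ ≤ ENNReal.ofReal e + ENNReal.ofReal e := by
          gcongr
          rw [Finset.sum_const, Finset.card_univ, Fintype.card_fin, nsmul_eq_mul,
            ← ENNReal.ofReal_natCast k, ← ENNReal.ofReal_mul (Nat.cast_nonneg k)]
          apply ENNReal.ofReal_le_ofReal
          have h1 : (k:ℝ)/(k+1) ≤ 1 := by
            rw [div_le_one (by positivity)]; linarith
          calc (k:ℝ) * (e/(k+1)) = e * ((k:ℝ)/(k+1)) := by ring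
            _ ≤ e * 1 := by gcongr
            _ = e := mul_one e
      _ = ENNReal.ofReal (2 * e) := by
          rw [← ENNReal.ofReal_add he.le he.le]; ring_nf
  -- the separation constant δ
  set D : Set (X × X) :=
    ⋃ p : Fin k × Fin k, if p.1 ≠ p.2 then C p.1 ×ˢ C p.2 else ∅ with hD
  have hDcomp : IsCompact D := by
    apply isCompact_iUnion
    intro p
    split_ifs
    · exact (hCcomp p.1).prod (hCcomp p.2)
    · exact isCompact_empty
  have hmemD : ∀ p : X × X, p ∈ D → ∃ i j : Fin k, i ≠ j ∧ p.1 ∈ C i ∧ p.2 ∈ C j := by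
    intro p hp
    obtain ⟨q, hq⟩ := mem_iUnion.1 hp
    by_cases h : q.1 ≠ q.2
    · rw [if_pos h] at hq
      exact ⟨q.1, q.2, h, hq.1, hq.2⟩
    · rw [if_neg h] at hq
      exact absurd hq (notMem_empty _)
  have hCdisj : ∀ i j : Fin k, i ≠ j → Disjoint (C i) (C j) := by
    intro i j hij
    exact Disjoint.mono (hCsub i) (hCsub j) (hBdisj (by simpa using Fin.val_ne_of_ne hij))
  have key : ∃ δ : ℝ, 0 < δ ∧ ∀ p : X × X, p ∈ D → δ ≤ dist p.1 p.2 := by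
    rcases D.eq_empty_or_nonempty with hDe | hDne
    · exact ⟨1, one_pos, fun p hp => by rw [hDe] at hp; exact absurd hp (notMem_empty _)⟩
    · obtain ⟨p₀, hp₀, hmin⟩ := hDcomp.exists_isMinOn hDne
        (continuous_dist.continuousOn : ContinuousOn (fun p : X × X => dist p.1 p.2) D)
      refine ⟨dist p₀.1 p₀.2, ?_, fun p hp => hmin hp⟩
      obtain ⟨i, j, hij, h1, h2⟩ := hmemD p₀ hp₀
      have : p₀.1 ≠ p₀.2 := fun h => (hCdisj i j hij).ne_of_mem h1 h2 (by rw [h])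
      exact dist_pos.2 this
  obtain ⟨δ, hδ, hδD⟩ := key
  refine ⟨K, hKcomp, hKm, δ, hδ, ?_⟩
  intro x hx y hy hxy n hn
  obtain ⟨i, hi⟩ := mem_iUnion.1 hx
  obtain ⟨j, hj⟩ := mem_iUnion.1 hy
  have hij : i = j := by
    by_contra h
    have : (x, y) ∈ D := mem_iUnion.2 ⟨(i, j), by rw [if_pos h]; exact ⟨hi, hj⟩⟩
    exact absurd (hδD _ this) (not_le.2 hxy)
  subst hij
  have hxA : x ∈ A ⟨(i:ℕ), i.isLt⟩ := by
    have h := hBsub i (hCsub i hi)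
    simp only [hA'] at h
    rwa [dif_pos i.isLt] at h
  have hyA : y ∈ A ⟨(i:ℕ), i.isLt⟩ := by
    have h := hBsub i (hCsub i hj)
    simp only [hA'] at h
    rwa [dif_pos i.isLt] at h
  exact hfb ⟨(i:ℕ), i.isLt⟩ x hxA y hyA n hn

theorem stmt3 {X : Type*} [MetricSpace X] [CompactSpace X]
    [MeasurableSpace X] [BorelSpace X]
    (T : X ≃ₜ X) (μ : Measure X) [IsProbabilityMeasure μ] [μ.Regular]
    (hT : MeasurePreserving (⇑T) μ μ) (f : X → ℝ) (hf : Integrable f μ)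
    (hyp : ∀ ε : ℝ, 0 < ε → ∃ (k : ℕ) (A : Fin k → Set X),
      (∀ i, MeasurableSet (A i)) ∧ μ (⋃ i, A i) > ENNReal.ofReal (1 - ε) ∧
      ∀ i : Fin k, ∀ x ∈ A i, ∀ y ∈ A i, ∀ n : ℕ, 1 ≤ n →
        fbar (⇑T) f n x y < ε) :
    ∀ τ : ℝ, 0 < τ → ∃ K : Set X, IsCompact K ∧
      μ K > ENNReal.ofReal (1 - τ) ∧
      ∀ ε : ℝ, 0 < ε → ∃ δ : ℝ, 0 < δ ∧ ∀ x ∈ K, ∀ y ∈ K, dist x y < δ →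
        ∀ n : ℕ, 1 ≤ n → fbar (⇑T) f n x y < ε := by
  intro τ hτ
  set τ' : ℝ := min (τ / 2) (1 / 2) with hτ'
  have hτ'pos : 0 < τ' := lt_min (by linarith) (by norm_num)
  have hτ'le : τ' ≤ τ / 2 := min_le_left _ _
  have hτ'half : τ' ≤ 1 / 2 := min_le_right _ _
  set e : ℕ → ℝ := fun j => min (1 / (j + 1)) (τ' / 2 / 2 ^ j / 2) with he_def
  have hepos : ∀ j, 0 < e j := fun j => lt_min (by positivity) (by positivity)
  have he1 : ∀ j, e j ≤ 1 := by
    intro j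
    refine le_trans (min_le_left _ _) ?_
    rw [div_le_one (by positivity)]
    have : (0:ℝ) ≤ j := Nat.cast_nonneg j
    linarith
  have H : ∀ j : ℕ, ∃ C : Set X, IsCompact C ∧
      μ Cᶜ ≤ ENNReal.ofReal (τ' / 2 / 2 ^ j) ∧
      ∃ δ : ℝ, 0 < δ ∧ ∀ x ∈ C, ∀ y ∈ C, dist x y < δ → ∀ n : ℕ, 1 ≤ n →
        fbar (⇑T) f n x y < e j := by
    intro j
    obtain ⟨k, A, hA, hm, hfb⟩ := hyp (e j) (hepos j)
    obtain ⟨C, hc1, hc2, δ, hδ, hδp⟩ := step_lemma (⇑T) f μ (hepos j) (he1 j) hA hm hfb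
    refine ⟨C, hc1, le_trans hc2 (ENNReal.ofReal_le_ofReal ?_), δ, hδ, hδp⟩
    have := min_le_right (1 / ((j:ℝ) + 1)) (τ' / 2 / 2 ^ j / 2)
    rw [he_def]
    linarith
  choose C hCcomp hCm δ hδ hδp using H
  set K : Set X := ⋂ j, C j with hKdef
  have hKcomp : IsCompact K :=
    (isClosed_iInter fun j => (hCcomp j).isClosed).isCompact
  have hKc : μ Kᶜ ≤ ENNReal.ofReal τ' := by
    have hco : Kᶜ = ⋃ j, (C j)ᶜ := by rw [hKdef, compl_iInter]
    rw [hco]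
    calc μ (⋃ j, (C j)ᶜ) ≤ ∑' j, μ (C j)ᶜ := measure_iUnion_le _
      _ ≤ ∑' j, ENNReal.ofReal (τ' / 2 / 2 ^ j) := ENNReal.tsum_le_tsum fun j => hCm j
      _ = ENNReal.ofReal (∑' j, τ' / 2 / 2 ^ j) :=
          (ENNReal.ofReal_tsum_of_nonneg (fun j => by positivity)
            (summable_geometric_two' τ')).symm
      _ = ENNReal.ofReal τ' := by rw [tsum_geometric_two' τ']
  have hK1 : μ K + μ Kᶜ = 1 := by
    simpa using measure_add_measure_compl (μ := μ) hKcomp.isClosed.measurableSet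
  have hlt : ENNReal.ofReal (1 - τ) + μ Kᶜ < 1 := by
    rcases le_or_gt (1 - τ) 0 with h | h
    · rw [ENNReal.ofReal_eq_zero.2 h, zero_add]
      exact lt_of_le_of_lt hKc (by rw [ENNReal.ofReal_lt_one]; linarith)
    · calc ENNReal.ofReal (1 - τ) + μ Kᶜ
          ≤ ENNReal.ofReal (1 - τ) + ENNReal.ofReal τ' := add_le_add le_rfl hKc
        _ = ENNReal.ofReal (1 - τ + τ') := (ENNReal.ofReal_add h.le hτ'pos.le).symm
        _ < 1 := by rw [ENNReal.ofReal_lt_one]; linarith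
  have hKμ : μ K > ENNReal.ofReal (1 - τ) := by
    by_contra hcon
    push_neg at hcon
    have h1 : (1:ℝ≥0∞) ≤ ENNReal.ofReal (1 - τ) + μ Kᶜ := by
      rw [← hK1]; exact add_le_add hcon le_rfl
    exact absurd (lt_of_le_of_lt h1 hlt) (lt_irrefl _)
  refine ⟨K, hKcomp, hKμ, ?_⟩
  intro ε hε
  obtain ⟨m, hm⟩ := exists_nat_one_div_lt hε
  refine ⟨δ m, hδ m, fun x hx y hy hxy n hn => ?_⟩
  have hfb := hδp m x (iInter_subset _ m hx) y (iInter_subset _ m hy) hxy n hn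
  exact lt_trans (lt_of_lt_of_le hfb (min_le_left _ _)) hm
end

section
/- Let (X,d) be a compact metric space, T a homeomorphism, μ a T-invariant Borel probability measure, and f ∈ L¹(X,μ). If f is μ-equicontinuous in the mean, then μ has bounded complexity with respect to the pseudometrics f̂_n: for every ε>0 there exists C ∈ ℕ such that for every n≥1 there is a finite set F ⊂ X with #F ≤ C and μ(⋃_{x∈F}{y : f̂_n(x,y) < ε}) > 1−ε, where f̂_n(x,y) = max_{1≤k≤n} (1/k)∑_{i=0}^{k−1}|f(Tⁱx)−f(Tⁱy)|. -/
/-!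
Cover the compact set `K` of measure `> 1 - ε` on which the Birkhoff averages are
equicontinuous by finitely many `δ`-balls. Since one `δ` controls the averages of every
length at once, the same centres serve as an `ε`-net for every `f̂ₙ`, so their number is a
bound `C` independent of `n`.
-/

open MeasureTheory Filter Metric Set

/-- `f̂ₙ(x,y) = max_{1 ≤ k ≤ n} f̄ₖ(x,y)`. -/
noncomputable def fhat {X : Type*} (T : X → X) (f : X → ℝ) (n : ℕ) (x y : X) : ℝ :=
  ⨆ k : Fin n, fbar T f (k + 1) x y

lemma fhat_lt_of_forall_fbar_lt {X : Type*} {T : X → X} {f : X → ℝ} {n : ℕ} {x y : X} {ε : ℝ}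
    (hn : 1 ≤ n) (h : ∀ k : ℕ, 1 ≤ k → k ≤ n → fbar T f k x y < ε) : fhat T f n x y < ε := by
  have : Nonempty (Fin n) := ⟨⟨0, hn⟩⟩
  obtain ⟨k₀, hk₀⟩ := Finite.exists_max fun k : Fin n => fbar T f (k + 1) x y
  exact (ciSup_le hk₀).trans_lt (h _ k₀.val.succ_pos k₀.isLt)

lemma IsCompact.exists_finset_subset_biUnion_fhat_lt {X : Type*} [PseudoMetricSpace X]
    {T : X → X} {f : X → ℝ} {K : Set X} (hK : IsCompact K) {ε δ : ℝ} (hδ : 0 < δ)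
    (hKδ : ∀ x ∈ K, ∀ y ∈ K, dist x y < δ → ∀ n : ℕ, 1 ≤ n → fbar T f n x y < ε) :
    ∃ F : Finset X, ∀ n : ℕ, 1 ≤ n → K ⊆ ⋃ x ∈ F, {y : X | fhat T f n x y < ε} := by
  obtain ⟨t, htK, htfin, hKt⟩ := hK.finite_cover_balls hδ
  refine ⟨htfin.toFinset, fun n hn y hy => ?_⟩
  obtain ⟨x, hxt, hyx⟩ := mem_iUnion₂.1 (hKt hy)
  refine mem_iUnion₂.2 ⟨x, htfin.mem_toFinset.2 hxt, fhat_lt_of_forall_fbar_lt hn fun k hk _ => ?_⟩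
  exact hKδ x (htK hxt) y hy (mem_ball'.1 hyx) k hk

theorem stmt4_general {X : Type*} [MetricSpace X]
    [MeasurableSpace X]
    (T : X ≃ₜ X) (μ : Measure X)
    (f : X → ℝ)
    (hmean : ∀ τ : ℝ, 0 < τ → ∃ K : Set X, IsCompact K ∧
      μ K > ENNReal.ofReal (1 - τ) ∧
      ∀ ε : ℝ, 0 < ε → ∃ δ : ℝ, 0 < δ ∧ ∀ x ∈ K, ∀ y ∈ K, dist x y < δ →
        ∀ n : ℕ, 1 ≤ n → fbar (⇑T) f n x y < ε) :
    ∀ ε : ℝ, 0 < ε → ∃ C : ℕ, ∀ n : ℕ, 1 ≤ n → ∃ F : Finset X,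
      F.card ≤ C ∧
      μ (⋃ x ∈ F, {y : X | fhat (⇑T) f n x y < ε}) > ENNReal.ofReal (1 - ε) := by
  intro ε hε
  obtain ⟨K, hK, hμK, hequi⟩ := hmean ε hε
  obtain ⟨δ, hδ, hKδ⟩ := hequi ε hε
  obtain ⟨F, hF⟩ := hK.exists_finset_subset_biUnion_fhat_lt hδ hKδ
  exact ⟨F.card, fun n hn => ⟨F, le_rfl, hμK.trans_le (measure_mono (hF n hn))⟩⟩

theorem stmt4 {X : Type*} [MetricSpace X] [CompactSpace X]
    [MeasurableSpace X] [BorelSpace X]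
    (T : X ≃ₜ X) (μ : Measure X) [IsProbabilityMeasure μ]
    (hT : MeasurePreserving (⇑T) μ μ) (f : X → ℝ) (hf : Integrable f μ)
    (hmean : ∀ τ : ℝ, 0 < τ → ∃ K : Set X, IsCompact K ∧
      μ K > ENNReal.ofReal (1 - τ) ∧
      ∀ ε : ℝ, 0 < ε → ∃ δ : ℝ, 0 < δ ∧ ∀ x ∈ K, ∀ y ∈ K, dist x y < δ →
        ∀ n : ℕ, 1 ≤ n → fbar (⇑T) f n x y < ε) :
    ∀ ε : ℝ, 0 < ε → ∃ C : ℕ, ∀ n : ℕ, 1 ≤ n → ∃ F : Finset X,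
      F.card ≤ C ∧
      μ (⋃ x ∈ F, {y : X | fhat (⇑T) f n x y < ε}) > ENNReal.ofReal (1 - ε) :=
  stmt4_general T μ f hmean
end

section
/- Let (X,d) be a compact metric space, T a homeomorphism, μ a T-invariant Borel probability measure, and f ∈ L²(X,μ). If f is an almost periodic function (the orbit {f∘Tⁿ : n∈ℤ} is precompact in L²(X,μ)), then μ has bounded complexity with respect to f̄_n(x,y) = (1/n)∑_{i=0}^{n−1}|f(Tⁱx)−f(Tⁱy)|: for every ε>0 there exists C∈ℕ such that for every n≥1 there is a finite set F ⊂ X with #F ≤ C and μ(⋃_{x∈F}{y : f̄_n(x,y)<ε}) > 1−ε. -/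
open MeasureTheory Filter Metric Set

/-!
Precompactness of the orbit gives, for every `δ > 0`, finitely many functions `g` such that
every `f ∘ Tⁱ` lies within `δ` in `L¹` of one of them, say `gᵢ`. Evaluating these finitely many
functions maps `X` into a finite-dimensional space, where a compact set carries almost all of the
image measure; covering it by finitely many small balls cuts most of `X` into finitely many cells
on which all the `g` barely vary. The number of cells does not depend on `n`. For fixed `n`,
Markov's inequality makes the averaged error `(1/n) ∑ |f(Tⁱx) - gᵢ(x)|` small off a small set, and
the triangle inequality then bounds `fbar n x y` for any two points of small error in one cell.
-/

open scoped ENNReal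

noncomputable def meanAbs {X : Type*} (a : ℕ → X → ℝ) (n : ℕ) (x : X) : ℝ :=
  (∑ i ∈ Finset.range n, |a i x|) / n

lemma meanAbs_nonneg {X : Type*} (a : ℕ → X → ℝ) (n : ℕ) (x : X) : 0 ≤ meanAbs a n x := by
  unfold meanAbs; positivity

lemma fbar_le_meanAbs_add_add {X : Type*} {T : X → X} {f : X → ℝ} (φ : ℕ → X → ℝ) {n : ℕ}
    {x y : X} {r : ℝ} (hr : 0 ≤ r) (hxy : ∀ i, |φ i x - φ i y| ≤ r) :
    fbar T f n x y ≤ meanAbs (fun i z => f (T^[i] z) - φ i z) n x + r +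
      meanAbs (fun i z => f (T^[i] z) - φ i z) n y := by
  have hterm : ∀ i, |f (T^[i] x) - f (T^[i] y)| ≤
      |f (T^[i] x) - φ i x| + r + |f (T^[i] y) - φ i y| := fun i => by
    have := abs_sub_le (f (T^[i] x)) (φ i x) (f (T^[i] y))
    have := abs_sub_le (φ i x) (φ i y) (f (T^[i] y))
    rw [abs_sub_comm (φ i y)] at this
    linarith [hxy i]
  have hr' : (∑ _i ∈ Finset.range n, r) / n ≤ r := by
    rcases n.eq_zero_or_pos with rfl | hn
    · simpa using hr
    · rw [Finset.sum_const, Finset.card_range, nsmul_eq_mul,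
        mul_div_cancel_left₀ _ (Nat.cast_pos.2 hn).ne']
  calc fbar T f n x y
      ≤ (∑ i ∈ Finset.range n, (|f (T^[i] x) - φ i x| + r + |f (T^[i] y) - φ i y|)) / n :=
        div_le_div_of_nonneg_right (Finset.sum_le_sum fun i _ => hterm i) n.cast_nonneg
    _ ≤ _ := by
        rw [Finset.sum_add_distrib, Finset.sum_add_distrib, add_div, add_div]
        unfold meanAbs
        linarith

lemma exists_finset_meets_of_inter_nonempty {X : Type*} (P : Finset (Set X)) (G : Set X) :
    ∃ F : Finset X, F.card ≤ P.card ∧ ∀ p ∈ P, (G ∩ p).Nonempty → ∃ x ∈ F, x ∈ G ∩ p := by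
  classical
  set Q := P.filter fun p => (G ∩ p).Nonempty
  refine ⟨Q.attach.image fun p => (Finset.mem_filter.1 p.2).2.some, ?_, fun p hp hGp => ?_⟩
  · exact Finset.card_image_le.trans (Finset.card_attach.trans_le (Finset.card_filter_le _ _))
  · have hpQ : p ∈ Q := Finset.mem_filter.2 ⟨hp, hGp⟩
    exact ⟨_, Finset.mem_image_of_mem _ (Finset.mem_attach _ ⟨p, hpQ⟩),
      (Finset.mem_filter.1 hpQ).2.some_mem⟩

section Measure

variable {X : Type*} [MeasurableSpace X] {μ : Measure X}

lemma integrable_meanAbs {a : ℕ → X → ℝ} (ha : ∀ i, Integrable (a i) μ) (n : ℕ) :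
    Integrable (meanAbs a n) μ :=
  (integrable_finsetSum _ fun i _ => (ha i).abs).div_const _

lemma integral_meanAbs_le {a : ℕ → X → ℝ} {δ : ℝ} (ha : ∀ i, Integrable (a i) μ)
    (hδ : ∀ i, ∫ x, |a i x| ∂μ ≤ δ) (n : ℕ) : ∫ x, meanAbs a n x ∂μ ≤ δ := by
  have hδ0 : 0 ≤ δ := (integral_nonneg fun x => abs_nonneg (a 0 x)).trans (hδ 0)
  rcases n.eq_zero_or_pos with rfl | hn
  · simpa [meanAbs] using hδ0
  unfold meanAbs
  rw [integral_div, integral_finsetSum _ fun i _ => (ha i).abs, div_le_iff₀ (by positivity)]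
  calc ∑ i ∈ Finset.range n, ∫ x, |a i x| ∂μ ≤ ∑ _i ∈ Finset.range n, δ :=
        Finset.sum_le_sum fun i _ => hδ i
    _ = δ * n := by simp [mul_comm]

lemma meas_ge_meanAbs_le_div [IsFiniteMeasure μ] {a : ℕ → X → ℝ} {δ t : ℝ}
    (ha : ∀ i, Integrable (a i) μ) (hδ : ∀ i, ∫ x, |a i x| ∂μ ≤ δ) (ht : 0 < t) (n : ℕ) :
    μ {x | t ≤ meanAbs a n x} ≤ ENNReal.ofReal (δ / t) := by
  rw [← ofReal_measureReal]
  refine ENNReal.ofReal_le_ofReal ?_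
  rw [le_div_iff₀' ht]
  exact (mul_meas_ge_le_integral_of_nonneg (ae_of_all _ (meanAbs_nonneg a n))
    (integrable_meanAbs ha n) t).trans (integral_meanAbs_le ha hδ n)

lemma exists_finset_cells_of_measurable [IsFiniteMeasure μ] (Φ : Finset (X → ℝ))
    (hΦ : ∀ φ ∈ Φ, Measurable φ) {r : ℝ} (hr : 0 < r) {η : ℝ≥0∞} (hη : 0 < η) :
    ∃ P : Finset (Set X), (∀ p ∈ P, ∀ x ∈ p, ∀ y ∈ p, ∀ φ ∈ Φ, |φ x - φ y| < r) ∧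
      μ (⋃ p ∈ P, p)ᶜ ≤ η := by
  classical
  set v : X → (Φ → ℝ) := fun x φ => (φ : X → ℝ) x
  have hv : Measurable v := measurable_pi_lambda _ fun φ => hΦ φ φ.2
  obtain ⟨K, hK, hKμ⟩ := (isTightMeasureSet_iff_exists_isCompact_measure_compl_le.1
    (isTightMeasureSet_singleton (μ := μ.map v))) η hη
  obtain ⟨c, -, hc, hKc⟩ := finite_cover_balls_of_compact hK (half_pos hr)
  refine ⟨hc.toFinset.image fun z => v ⁻¹' ball z (r / 2), ?_, ?_⟩
  · simp only [Finset.mem_image, Set.Finite.mem_toFinset]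
    rintro _ ⟨z, -, rfl⟩ x hx y hy φ hφ
    calc |φ x - φ y| = dist (v x ⟨φ, hφ⟩) (v y ⟨φ, hφ⟩) := rfl
      _ ≤ dist (v x) (v y) := dist_le_pi_dist _ _ _
      _ ≤ dist (v x) z + dist (v y) z := dist_triangle_right _ _ _
      _ < r / 2 + r / 2 := add_lt_add hx hy
      _ = r := add_halves r
  · have hsub : (⋃ p ∈ hc.toFinset.image fun z => v ⁻¹' ball z (r / 2), p)ᶜ ⊆ v ⁻¹' Kᶜ := by
      intro x hx hxK
      obtain ⟨z, hz, hxz⟩ := mem_iUnion₂.1 (hKc hxK)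
      exact hx (mem_iUnion₂.2 ⟨_, Finset.mem_image_of_mem _ (hc.mem_toFinset.2 hz), hxz⟩)
    calc _ ≤ μ (v ⁻¹' Kᶜ) := measure_mono hsub
      _ = μ.map v Kᶜ := (Measure.map_apply hv hK.isClosed.measurableSet.compl).symm
      _ ≤ η := hKμ _ rfl

lemma ofReal_one_sub_lt_of_measure_compl_lt [IsProbabilityMeasure μ] {s : Set X} {ε : ℝ}
    (h : μ sᶜ < ENNReal.ofReal (min ε 1)) : ENNReal.ofReal (1 - ε) < μ s := by
  have hsub : 1 ≤ μ.real s + μ.real sᶜ := by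
    rw [← probReal_univ (μ := μ), ← union_compl_self s]
    exact measureReal_union_le _ _
  have hc : μ.real sᶜ < min ε 1 := by
    rwa [← ofReal_measureReal, ENNReal.ofReal_lt_ofReal_iff_of_nonneg measureReal_nonneg] at h
  rw [← ofReal_measureReal, ENNReal.ofReal_lt_ofReal_iff (by linarith [min_le_right ε 1])]
  linarith [min_le_left ε 1]

def HasFiniteL1OrbitNet (μ : Measure X) (T : X → X) (f : X → ℝ) : Prop :=
  ∀ δ > 0, ∃ Φ : Finset (X → ℝ), (∀ φ ∈ Φ, Measurable φ) ∧ ∀ i : ℕ, ∃ φ ∈ Φ,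
    Integrable (fun x => f (T^[i] x) - φ x) μ ∧ ∫ x, |f (T^[i] x) - φ x| ∂μ ≤ δ

theorem HasFiniteL1OrbitNet.exists_finset_measure_fbar_lt [IsProbabilityMeasure μ] {T : X → X}
    {f : X → ℝ} (hf : HasFiniteL1OrbitNet μ T f) {ε : ℝ} (hε : 0 < ε) :
    ∃ C : ℕ, ∀ n : ℕ, ∃ F : Finset X, F.card ≤ C ∧
      ENNReal.ofReal (1 - ε) < μ (⋃ x ∈ F, {y : X | fbar T f n x y < ε}) := by
  set η := min ε 1 / 3 with hη_def
  have hη : 0 < η := by positivity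
  obtain ⟨Φ, hΦm, hΦ⟩ := hf (ε * η / 3) (by positivity)
  choose φ hφΦ hint hle using hΦ
  obtain ⟨P, hP, hPμ⟩ := exists_finset_cells_of_measurable (μ := μ) Φ hΦm (r := ε / 3)
    (by positivity) (ENNReal.ofReal_pos.2 hη)
  refine ⟨P.card, fun n => ?_⟩
  set err := meanAbs (fun i z => f (T^[i] z) - φ i z) n
  obtain ⟨F, hFcard, hF⟩ := exists_finset_meets_of_inter_nonempty P {x | err x < ε / 3}
  refine ⟨F, hFcard, ofReal_one_sub_lt_of_measure_compl_lt ?_⟩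
  have hcover : (⋃ p ∈ P, p) ∩ {y | err y < ε / 3} ⊆ ⋃ x ∈ F, {y | fbar T f n x y < ε} := by
    rintro y ⟨hyP, hy⟩
    obtain ⟨p, hp, hyp⟩ := mem_iUnion₂.1 hyP
    obtain ⟨x, hxF, hx, hxp⟩ := hF p hp ⟨y, hy, hyp⟩
    have hxy := fbar_le_meanAbs_add_add (T := T) (f := f) (n := n) φ (by positivity : 0 ≤ ε / 3)
      fun i => (hP p hp x hxp y hyp _ (hφΦ i)).le
    change err x < ε / 3 at hx
    change err y < ε / 3 at hy
    exact mem_iUnion₂.2 ⟨x, hxF, hxy.trans_lt (by linarith)⟩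
  -- Markov's inequality at level `ε / 3` turns the `L¹` bound `ε * η / 3` into measure `η`.
  have hmarkov : μ {y | err y < ε / 3}ᶜ ≤ ENNReal.ofReal η := by
    simp only [compl_ofPred, not_lt]
    refine (meas_ge_meanAbs_le_div (μ := μ) hint hle (by positivity : 0 < ε / 3) n).trans_eq ?_
    congr 1
    field_simp
  calc μ (⋃ x ∈ F, {y | fbar T f n x y < ε})ᶜ
      ≤ μ ((⋃ p ∈ P, p)ᶜ ∪ {y | err y < ε / 3}ᶜ) := by
        rw [← compl_inter]
        exact measure_mono (compl_subset_compl.2 hcover)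
    _ ≤ ENNReal.ofReal η + ENNReal.ofReal η := (measure_union_le _ _).trans (add_le_add hPμ hmarkov)
    _ < ENNReal.ofReal (min ε 1) := by
        rw [← ENNReal.ofReal_add hη.le hη.le, ENNReal.ofReal_lt_ofReal_iff (by positivity)]
        linarith [hη_def]

section Lp

variable {p : ℝ≥0∞} [Fact (1 ≤ p)]

lemma Lp.integral_norm_le_norm {E : Type*} [NormedAddCommGroup E] [IsProbabilityMeasure μ]
    (h : Lp E p μ) : ∫ x, ‖h x‖ ∂μ ≤ ‖h‖ := by
  rw [integral_norm_eq_lintegral_enorm (Lp.aestronglyMeasurable h),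
    ← eLpNorm_one_eq_lintegral_enorm, Lp.norm_def]
  exact ENNReal.toReal_mono (Lp.eLpNorm_ne_top h)
    (eLpNorm_le_eLpNorm_of_exponent_le Fact.out (Lp.aestronglyMeasurable h))

lemma Lp.coeFn_pow_ae_eq_comp_iterate {E : Type*} [NormedAddCommGroup E] [NormedSpace ℝ E]
    {T : X → X} (hT : MeasurePreserving T μ μ) (U : Lp E p μ ≃ₗᵢ[ℝ] Lp E p μ)
    (hU : ∀ g : Lp E p μ, (U g : X → E) =ᵐ[μ] fun x => g (T x)) (g : Lp E p μ) (i : ℕ) :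
    ((U ^ i) g : X → E) =ᵐ[μ] fun x => g (T^[i] x) := by
  induction i with
  | zero => rfl
  | succ i ih =>
    rw [pow_succ']
    exact (hU _).trans (hT.quasiMeasurePreserving.ae_eq_comp ih)

theorem hasFiniteL1OrbitNet_of_totallyBounded [IsProbabilityMeasure μ] {T : X → X}
    (hT : MeasurePreserving T μ μ) {f : X → ℝ} (fL : Lp ℝ p μ) (hfL : (fL : X → ℝ) =ᵐ[μ] f)
    (U : Lp ℝ p μ ≃ₗᵢ[ℝ] Lp ℝ p μ) (hU : ∀ g : Lp ℝ p μ, (U g : X → ℝ) =ᵐ[μ] fun x => g (T x))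
    (hfU : TotallyBounded (range fun i : ℕ => (U ^ i) fL)) : HasFiniteL1OrbitNet μ T f := by
  classical
  intro δ hδ
  obtain ⟨t, -, ht, hcov⟩ := finite_approx_of_totallyBounded hfU δ hδ
  have hnet : ∀ i : ℕ, ∃ g ∈ t, dist ((U ^ i) fL) g < δ := fun i => by
    simpa using hcov (mem_range_self i)
  choose g hgt hg using hnet
  refine ⟨ht.toFinset.image fun g : Lp ℝ p μ => (g : X → ℝ), ?_, fun i => ?_⟩
  · simp only [Finset.mem_image, Set.Finite.mem_toFinset]
    rintro _ ⟨g, -, rfl⟩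
    exact (Lp.stronglyMeasurable g).measurable
  have hae : ((U ^ i) fL - g i : Lp ℝ p μ) =ᵐ[μ] fun x => f (T^[i] x) - g i x := by
    filter_upwards [Lp.coeFn_sub ((U ^ i) fL) (g i), Lp.coeFn_pow_ae_eq_comp_iterate hT U hU fL i,
      (hT.iterate i).quasiMeasurePreserving.ae_eq_comp hfL] with x hsub hpow hf
    rw [hsub, Pi.sub_apply, hpow]
    exact congrArg (· - g i x) hf
  refine ⟨g i, Finset.mem_image_of_mem _ (ht.mem_toFinset.2 (hgt i)),
    ((Lp.memLp _).integrable Fact.out).congr hae, ?_⟩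
  calc ∫ x, |f (T^[i] x) - g i x| ∂μ = ∫ x, ‖((U ^ i) fL - g i : Lp ℝ p μ) x‖ ∂μ :=
        integral_congr_ae (hae.fun_comp (‖·‖ : ℝ → ℝ)).symm
    _ ≤ ‖(U ^ i) fL - g i‖ := Lp.integral_norm_le_norm _
    _ ≤ δ := (dist_eq_norm ((U ^ i) fL) (g i) ▸ hg i).le

end Lp

end Measure

theorem stmt12_general {X : Type*} [MetricSpace X]
    [MeasurableSpace X]
    (T : X ≃ₜ X) (μ : Measure X) [IsProbabilityMeasure μ]
    (hT : MeasurePreserving (⇑T) μ μ)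
    (f : X → ℝ) (fL : Lp ℝ 2 μ) (hfL : (fL : X → ℝ) =ᵐ[μ] f)
    (U : Lp ℝ 2 μ ≃ₗᵢ[ℝ] Lp ℝ 2 μ)
    (hU : ∀ g : Lp ℝ 2 μ, (U g : X → ℝ) =ᵐ[μ] fun x => g (T x))
    (hap : IsCompact (closure (Set.range fun n : ℤ => (U ^ n) fL))) :
    ∀ ε : ℝ, 0 < ε → ∃ C : ℕ, ∀ n : ℕ, 1 ≤ n → ∃ F : Finset X,
      F.card ≤ C ∧
      μ (⋃ x ∈ F, {y : X | fbar (⇑T) f n x y < ε}) > ENNReal.ofReal (1 - ε) := by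
  intro ε hε
  have hforward : range (fun i : ℕ => (U ^ i) fL) ⊆ closure (range fun n : ℤ => (U ^ n) fL) :=
    fun _ ⟨i, hi⟩ => subset_closure ⟨i, by simpa using hi⟩
  obtain ⟨C, hC⟩ := (hasFiniteL1OrbitNet_of_totallyBounded hT fL hfL U hU
    (hap.totallyBounded.subset hforward)).exists_finset_measure_fbar_lt hε
  exact ⟨C, fun n _ => hC n⟩

theorem stmt12 {X : Type*} [MetricSpace X] [CompactSpace X]
    [MeasurableSpace X] [BorelSpace X]
    (T : X ≃ₜ X) (μ : Measure X) [IsProbabilityMeasure μ]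
    (hT : MeasurePreserving (⇑T) μ μ)
    (f : X → ℝ) (fL : Lp ℝ 2 μ) (hfL : (fL : X → ℝ) =ᵐ[μ] f)
    (U : Lp ℝ 2 μ ≃ₗᵢ[ℝ] Lp ℝ 2 μ)
    (hU : ∀ g : Lp ℝ 2 μ, (U g : X → ℝ) =ᵐ[μ] fun x => g (T x))
    (hap : IsCompact (closure (Set.range fun n : ℤ => (U ^ n) fL))) :
    ∀ ε : ℝ, 0 < ε → ∃ C : ℕ, ∀ n : ℕ, 1 ≤ n → ∃ F : Finset X,
      F.card ≤ C ∧
      μ (⋃ x ∈ F, {y : X | fbar (⇑T) f n x y < ε}) > ENNReal.ofReal (1 - ε) :=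
  stmt12_general T μ hT f fL hfL U hU hap
end
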